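/- Let Ω ⊂ ℝⁿ (n = 2 or 3) be a bounded Lipschitz domain, let E_N = {x₁,…,x_N} ⊆ Ω̄ with density d_N = max_{x∈Ω̄} min_j |x - x_j|, and η_N(u) = max_j |u(x_j)|. Suppose there are constants C₄, C₅ > 0 such that ‖w‖_{H¹(Ω)} ≤ C₄ d_N^{-1/4} η_N(w) + C₅ d_N^{1/4} ‖w‖_{D(A)} for all w ∈ D(A) = H²(Ω) ∩ H₀¹(Ω), and that B satisfies ‖Bu - Bv‖_{L²} ≤ 2 C_B M^{p-1} ‖u-v‖_{H¹} for u, v in a set bounded by M in D(A), with ‖·‖_{D(A)} = ‖A·‖_{L²}. If 0 < d_N < (2 C_B C₅ M^{p-1})^{-4} and ū, v̄ ∈ D(A) with ‖ū‖, ‖v̄‖ ≤ M solve A ū + B ū = f̄ = A v̄ + B v̄ and ū(x_j) = v̄(x_j) for all j = 1,…,N, then ū = v̄ on Ω. -/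
import Mathlib


/-- determining nodes uniquely determine stationary solutions
(Theorem 2.1): with the nodal interpolation inequality
‖w‖_{H¹} ≤ C₄ d_N^{-1/4} η_N(w) + C₅ d_N^{1/4} ‖w‖_{D(A)}, ‖w‖_{D(A)} = ‖Aw‖_{L²},
the Lipschitz bound ‖Bu - Bv‖_{L²} ≤ 2C_B M^{p-1}‖u-v‖_{H¹} on the M-ball of D(A),
and 0 < d_N < (2C_B C₅ M^{p-1})^{-4}, any two stationary solutions bounded by M
agreeing at the nodes agree on Ω. -/
theorem stationary_determining_nodes {n : ℕ} (Ω : Set (EuclideanSpace ℝ (Fin n)))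
    (A B : (EuclideanSpace ℝ (Fin n) → ℝ) → (EuclideanSpace ℝ (Fin n) → ℝ))
    (nL2 nH1 : (EuclideanSpace ℝ (Fin n) → ℝ) → ℝ)
    (hAsub : ∀ u v, A (u - v) = A u - A v)
    (hL2neg : ∀ w, nL2 (-w) = nL2 w)
    (hL2nonneg : ∀ w, 0 ≤ nL2 w)
    (hL2def : ∀ w, nL2 (A w) = 0 → ∀ x ∈ Ω, w x = 0)
    (N : ℕ) (hN : 0 < N) (xj : Fin N → EuclideanSpace ℝ (Fin n))
    (hxj : ∀ j, xj j ∈ closure Ω)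
    (dN C4 C5 CB M p : ℝ) (hp : 1 < p)
    (hC4 : 0 < C4) (hC5 : 0 < C5) (hCB : 0 < CB) (hM : 0 < M)
    (hnodal : ∀ w, nH1 w ≤ C4 * dN ^ (-(1:ℝ)/4) * (⨆ j, |w (xj j)|) +
      C5 * dN ^ ((1:ℝ)/4) * nL2 (A w))
    (hB : ∀ u v, nL2 (A u) ≤ M → nL2 (A v) ≤ M →
      nL2 (B u - B v) ≤ 2 * CB * M ^ (p - 1) * nH1 (u - v))
    (hd0 : 0 < dN) (hd1 : dN < ((2 * CB * C5 * M ^ (p - 1))⁻¹) ^ (4 : ℕ))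
    (ubar vbar : EuclideanSpace ℝ (Fin n) → ℝ)
    (hub : nL2 (A ubar) ≤ M) (hvb : nL2 (A vbar) ≤ M)
    (heq : A ubar + B ubar = A vbar + B vbar)
    (hnodes : ∀ j, ubar (xj j) = vbar (xj j)) :
    ∀ x ∈ Ω, ubar x = vbar x := by
  haveI : Nonempty (Fin N) := Fin.pos_iff_nonempty.mp hN
  set w := ubar - vbar with hw
  set L := 2 * CB * C5 * M ^ (p - 1) with hL
  have hMp : 0 < M ^ (p - 1) := Real.rpow_pos_of_pos hM _
  have hLpos : 0 < L := by positivity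
  have hAw : A w = -(B ubar - B vbar) := by
    rw [hw, hAsub]
    funext y
    have := congrFun heq y
    simp only [Pi.add_apply, Pi.sub_apply, Pi.neg_apply] at this ⊢
    linarith
  have hsup : (⨆ j, |w (xj j)|) = 0 := by
    have : ∀ j, |w (xj j)| = (0 : ℝ) := by
      intro j
      simp [hw, Pi.sub_apply, hnodes j]
    simp only [this]
    exact ciSup_const
  have h1 : nL2 (A w) ≤ 2 * CB * M ^ (p - 1) * nH1 w := by
    rw [hAw, hL2neg]
    exact hB ubar vbar hub hvb
  have h2 : nH1 w ≤ C5 * dN ^ ((1:ℝ)/4) * nL2 (A w) := by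
    have := hnodal w
    rw [hsup] at this
    linarith
  have hdlt : dN ^ ((1:ℝ)/4) < L⁻¹ := by
    have h4 : ((L⁻¹) ^ (4 : ℕ)) ^ ((1:ℝ)/4) = L⁻¹ := by
      rw [← Real.rpow_natCast (L⁻¹) 4, ← Real.rpow_mul (by positivity)]
      norm_num
    calc dN ^ ((1:ℝ)/4) < ((L⁻¹) ^ (4 : ℕ)) ^ ((1:ℝ)/4) :=
          Real.rpow_lt_rpow hd0.le hd1 (by norm_num)
      _ = L⁻¹ := h4
  have hdpos : 0 < dN ^ ((1:ℝ)/4) := Real.rpow_pos_of_pos hd0 _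
  have hc : L * dN ^ ((1:ℝ)/4) < 1 := by
    have := (mul_lt_mul_of_pos_left hdlt hLpos)
    rwa [mul_inv_cancel₀ hLpos.ne'] at this
  have ha : 0 ≤ nL2 (A w) := hL2nonneg _
  have hchain : nL2 (A w) ≤ L * dN ^ ((1:ℝ)/4) * nL2 (A w) := by
    calc nL2 (A w) ≤ 2 * CB * M ^ (p - 1) * nH1 w := h1
      _ ≤ 2 * CB * M ^ (p - 1) * (C5 * dN ^ ((1:ℝ)/4) * nL2 (A w)) := by
          apply mul_le_mul_of_nonneg_left h2 (by positivity)
      _ = L * dN ^ ((1:ℝ)/4) * nL2 (A w) := by rw [hL]; ring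
  have hz : nL2 (A w) = 0 := by nlinarith
  intro x hx
  have := hL2def w hz x hx
  have hsub : ubar x - vbar x = 0 := this
  linarith
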